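/- arXiv:1011.4836 — 5 statements merged into one kernel-verified Lean document; each statement's English description precedes it below -/
import Mathlib

section
/- Let N = K·2^n + 1 where K is odd and K < 2^n. If there exists an integer a such that a^((N-1)/2) ≡ -1 (mod N), then N is prime. -/
/-!
Let `p` be any prime factor of `N`. Reducing `a` mod `p`, the element `a ^ K` has
`(a ^ K) ^ (2 ^ (n - 1)) = -1`, so its multiplicative order in `ZMod p` is exactly `2 ^ n`;
hence `2 ^ n ∣ p - 1` and `p > 2 ^ n > √N`. A number all of whose prime factors exceed its
square root is prime.
-/

theorem orderOf_eq_two_pow_succ_of_pow_two_pow_eq_neg_one {M : Type*} [Monoid M]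
    [HasDistribNeg M] (hM : (-1 : M) ≠ 1) {x : M} {k : ℕ} (h : x ^ 2 ^ k = -1) :
    orderOf x = 2 ^ (k + 1) :=
  orderOf_eq_prime_pow (by rwa [h]) (by rw [pow_succ, pow_mul, h, neg_one_sq])

theorem ZMod.two_pow_succ_dvd_sub_one_of_pow_eq_neg_one {p : ℕ} [Fact p.Prime] (hp : p ≠ 2)
    {x : ZMod p} {m k : ℕ} (h : x ^ (m * 2 ^ k) = -1) : 2 ^ (k + 1) ∣ p - 1 := by
  have : Fact (2 < p) := ⟨lt_of_le_of_ne (Fact.out : p.Prime).two_le hp.symm⟩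
  rw [pow_mul] at h
  have hxm : x ^ m ≠ 0 := by
    rintro h0
    rw [h0, zero_pow (by positivity), zero_eq_neg] at h
    exact one_ne_zero h
  rw [← orderOf_eq_two_pow_succ_of_pow_two_pow_eq_neg_one ZMod.neg_one_ne_one h]
  exact ZMod.orderOf_dvd_card_sub_one hxm

theorem Nat.prime_of_forall_prime_dvd_lt_sq {N : ℕ} (hN : 2 ≤ N)
    (h : ∀ p, p.Prime → p ∣ N → N < p ^ 2) : N.Prime := by
  by_contra hN'
  have hmin := Nat.minFac_sq_le_self (by omega) hN'
  exact absurd (h _ (Nat.minFac_prime (by omega)) (Nat.minFac_dvd N)) (not_lt.mpr hmin)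

theorem proth (K n : ℕ) (N : ℕ) (hn : 1 ≤ n) (hK : Odd K) (hKlt : K < 2 ^ n)
    (hN : N = K * 2 ^ n + 1) (a : ℤ)
    (ha : (a : ZMod N) ^ ((N - 1) / 2) = -1) : Nat.Prime N := by
  obtain ⟨m, rfl⟩ := Nat.exists_eq_add_of_le' hn
  have hexp : (N - 1) / 2 = K * 2 ^ m := by
    rw [hN, Nat.add_sub_cancel, pow_succ, ← mul_assoc, Nat.mul_div_cancel _ two_pos]
  have hNodd : Odd N := hN ▸ ((even_two.pow_of_ne_zero (by omega)).mul_left K).add_one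
  have hN2 : 2 ≤ N := by nlinarith [hK.pos, Nat.one_le_two_pow (n := m + 1)]
  refine Nat.prime_of_forall_prime_dvd_lt_sq hN2 fun p hp hpN => ?_
  have : Fact p.Prime := ⟨hp⟩
  have hap : (a : ZMod p) ^ (K * 2 ^ m) = -1 := by
    simpa only [hexp, map_pow, map_intCast, map_neg, map_one] using
      congrArg (ZMod.castHom hpN (ZMod p)) ha
  have hdvd := ZMod.two_pow_succ_dvd_sub_one_of_pow_eq_neg_one (hNodd.ne_two_of_dvd_nat hpN) hap
  have hpge : 2 ^ (m + 1) + 1 ≤ p := by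
    have := Nat.le_of_dvd (by have := hp.two_le; omega) hdvd
    omega
  nlinarith
end

section
/- Let N = K·p^n + 1 where p is prime, K < p^n and gcd(K,p) = 1, and suppose a is an integer that is not a p-th power residue modulo N (i.e., there is no x with x^p ≡ a (mod N)). Then N is prime if and only if Φ_p(a^((N-1)/p)) ≡ 0 (mod N), where Φ_p(X) = 1 + X + X^2 + ... + X^(p-1) is the p-th cyclotomic polynomial. -/
/-!
Write `b = a ^ ((N - 1) / p)`, a root of `X ^ p - 1 = (X - 1) Φ_p(X)`.

If `N` is prime, `(ZMod N)ˣ` is cyclic of order `N - 1`, so `b = 1` exactly when `a` is a `p`-th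
power; hence `b ≠ 1` and `Φ_p(b) = 0`.

Conversely, let `Φ_p(b) = 0` and let `q` be a prime factor of `N`. Reducing modulo `q`, the image
of `b` is a root of `Φ_p` different from `1` (as `q ≠ p`), so `a ^ K` has order exactly `p ^ n`
in `(ZMod q)ˣ` and `p ^ n ∣ q - 1`. Every prime factor of `N` then exceeds `p ^ n > √N`.
-/

open Finset

section GeomSum

variable {R : Type*} [CommRing R] {x : R} {n : ℕ}

theorem pow_eq_one_of_geom_sum_eq_zero (h : ∑ i ∈ range n, x ^ i = 0) : x ^ n = 1 := by
  rw [← sub_eq_zero, ← geom_sum_mul, h, zero_mul]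

theorem ne_one_of_geom_sum_eq_zero (hn : (n : R) ≠ 0) (h : ∑ i ∈ range n, x ^ i = 0) :
    x ≠ 1 := by
  rintro rfl
  simp_all

theorem geom_sum_eq_zero_of_pow_eq_one [IsDomain R] (hxn : x ^ n = 1) (hx : x ≠ 1) :
    ∑ i ∈ range n, x ^ i = 0 := by
  have h : (∑ i ∈ range n, x ^ i) * (x - 1) = 0 := by rw [geom_sum_mul, hxn, sub_self]
  exact (mul_eq_zero.mp h).resolve_right (sub_ne_zero.mpr hx)

end GeomSum

theorem IsCyclic.exists_pow_eq_of_pow_card_div_eq_one {G : Type*} [CommGroup G] [IsCyclic G]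
    [Finite G] {d : ℕ} (hd : d ∣ Nat.card G) {g : G} (hg : g ^ (Nat.card G / d) = 1) :
    ∃ x, x ^ d = g := by
  have hle : (powMonoidHom d : G →* G).range ≤ (powMonoidHom (Nat.card G / d)).ker := by
    rintro _ ⟨x, rfl⟩
    simp [← pow_mul, Nat.mul_div_cancel' hd, pow_card_eq_one']
  have hcard : Nat.card (powMonoidHom (Nat.card G / d) : G →* G).ker ≤
      Nat.card (powMonoidHom d : G →* G).range := by
    rw [IsCyclic.card_powMonoidHom_range, IsCyclic.card_powMonoidHom_ker, Nat.gcd_eq_right hd,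
      Nat.gcd_eq_right (Nat.div_dvd_of_dvd hd)]
  obtain ⟨x, hx⟩ : g ∈ (powMonoidHom d).range := Subgroup.eq_of_le_of_card_ge hle hcard ▸ hg
  exact ⟨x, hx⟩

namespace ZMod

variable {q p : ℕ} [Fact q.Prime]

theorem exists_pow_eq_of_pow_card_sub_one_div_eq_one (hpq : p ∣ q - 1) {a : ZMod q}
    (ha : a ≠ 0) (h : a ^ ((q - 1) / p) = 1) : ∃ x, x ^ p = a := by
  have hcard : Nat.card (ZMod q)ˣ = q - 1 := by rw [Nat.card_eq_fintype_card, card_units]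
  obtain ⟨x, hx⟩ := IsCyclic.exists_pow_eq_of_pow_card_div_eq_one (g := Units.mk0 a ha)
    (hcard ▸ hpq) (by rw [hcard]; ext; simpa using h)
  exact ⟨x, by simpa using congrArg Units.val hx⟩

theorem geom_sum_pow_card_sub_one_div_eq_zero (hpq : p ∣ q - 1) {a : ZMod q}
    (ha : ¬ ∃ x, x ^ p = a) : ∑ i ∈ range p, (a ^ ((q - 1) / p)) ^ i = 0 := by
  have hp : p ≠ 0 := by
    rintro rfl
    have := (Fact.out : q.Prime).two_le
    omega
  have ha0 : a ≠ 0 := by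
    rintro rfl
    exact ha ⟨0, zero_pow hp⟩
  apply geom_sum_eq_zero_of_pow_eq_one
  · rw [← pow_mul, Nat.div_mul_cancel hpq, pow_card_sub_one_eq_one ha0]
  · exact fun h ↦ ha (exists_pow_eq_of_pow_card_sub_one_div_eq_one hpq ha0 h)

theorem pow_dvd_card_sub_one_of_geom_sum_eq_zero (hp : p.Prime) (hqp : q ≠ p) {x : ZMod q}
    {m k : ℕ} (h : ∑ i ∈ range p, (x ^ (m * p ^ k)) ^ i = 0) : p ^ (k + 1) ∣ q - 1 := by
  have : Fact p.Prime := ⟨hp⟩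
  have hp0 : (p : ZMod q) ≠ 0 := by
    rw [Ne, natCast_eq_zero_iff, Nat.prime_dvd_prime_iff_eq Fact.out hp]
    exact hqp
  have hord : orderOf (x ^ m) = p ^ (k + 1) := by
    apply orderOf_eq_prime_pow
    · rw [← pow_mul]
      exact ne_one_of_geom_sum_eq_zero hp0 h
    · rw [← pow_mul, pow_succ, ← mul_assoc, pow_mul]
      exact pow_eq_one_of_geom_sum_eq_zero h
  have hx0 : x ^ m ≠ 0 := by
    intro h0
    rw [h0, orderOf_zero] at hord
    exact (pow_pos hp.pos _).ne hord
  exact hord ▸ orderOf_dvd_card_sub_one hx0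

end ZMod

theorem Nat.prime_of_lt_sq_of_forall_prime_dvd {N m : ℕ} (hN : 2 ≤ N) (hlt : N < (m + 1) ^ 2)
    (h : ∀ q, q.Prime → q ∣ N → m ∣ q - 1) : N.Prime := by
  by_contra hN'
  have hq := minFac_prime (show N ≠ 1 by omega)
  have hmq : m + 1 ≤ N.minFac := by
    have := hq.two_le
    have := Nat.le_of_dvd (by omega) (h _ hq (minFac_dvd N))
    omega
  exact ((Nat.pow_le_pow_left hmq 2).trans (minFac_sq_le_self (by omega) hN')).not_gt hlt

theorem generalized_proth_general (p K n N : ℕ) (hp : p.Prime) (hK : 0 < K)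
    (hKlt : K < p ^ n) (hN : N = K * p ^ n + 1) (a : ℤ)
    (ha : ¬ ∃ x : ℤ, (x : ZMod N) ^ p = (a : ZMod N)) :
    Nat.Prime N ↔ ∑ i ∈ Finset.range p, ((a : ZMod N) ^ ((N - 1) / p)) ^ i = 0 := by
  obtain ⟨k, rfl⟩ : ∃ k, n = k + 1 :=
    Nat.exists_eq_succ_of_ne_zero (by rintro rfl; simp at hKlt; omega)
  have hexp : (N - 1) / p = K * p ^ k := by
    rw [hN, Nat.add_sub_cancel, pow_succ, ← mul_assoc, Nat.mul_div_cancel _ hp.pos]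
  have hpN : p ∣ N - 1 := ⟨K * p ^ k, by rw [hN, Nat.add_sub_cancel]; ring⟩
  constructor
  · intro hNp
    have : Fact N.Prime := ⟨hNp⟩
    refine ZMod.geom_sum_pow_card_sub_one_div_eq_zero hpN fun ⟨x, hx⟩ ↦ ?_
    exact ha ⟨x.cast, by rwa [ZMod.intCast_zmod_cast]⟩
  · intro hsum
    refine Nat.prime_of_lt_sq_of_forall_prime_dvd (m := p ^ (k + 1)) (by subst hN; nlinarith)
      (by subst hN; nlinarith) fun q hq hqN ↦ ?_
    have : Fact q.Prime := ⟨hq⟩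
    have hqp : q ≠ p := by
      rintro rfl
      refine hq.not_dvd_one ((Nat.dvd_add_right hpN).mp ?_)
      rwa [Nat.sub_add_cancel (by omega)]
    apply ZMod.pow_dvd_card_sub_one_of_geom_sum_eq_zero hp hqp (x := (a : ZMod q)) (m := K)
    simpa only [hexp, map_sum, map_pow, map_intCast, map_zero] using
      congrArg (ZMod.castHom hqN (ZMod q)) hsum

theorem generalized_proth (p K n N : ℕ) (hp : p.Prime) (hK : 0 < K) (hn : 0 < n)
    (hKp : Nat.gcd K p = 1) (hKlt : K < p ^ n) (hN : N = K * p ^ n + 1) (a : ℤ)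
    (ha : ¬ ∃ x : ℤ, (x : ZMod N) ^ p = (a : ZMod N)) :
    Nat.Prime N ↔ ∑ i ∈ Finset.range p, ((a : ZMod N) ^ ((N - 1) / p)) ^ i = 0 :=
  generalized_proth_general p K n N hp hK hKlt hN a ha
end

section
/- Let N = K·p^n + 1 be prime, where p is prime, K is even and gcd(K,p) = 1. Then for every integer a > 1 with gcd(a,N) = 1, either a^K ≡ 1 (mod N), or there exists j with 0 ≤ j ≤ n-1 such that Φ_p(a^(K·p^j)) ≡ 0 (mod N). -/
/-!
Write `b = a ^ K`. By Fermat, `b ^ (p ^ n) = a ^ (N - 1) = 1`, so the order of `b` is a power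
`p ^ k` with `k ≤ n`. If `k = 0` then `b = 1`; otherwise `x = b ^ (p ^ (k - 1))` has order exactly
`p`, i.e. it is a primitive `p`-th root of unity in the field `ZMod N`, hence a root of `Φ_p`.
-/

theorem eq_one_or_exists_isPrimitiveRoot_pow_prime_pow {M : Type*} [CommMonoid M] {p n : ℕ}
    (hp : p.Prime) {b : M} (hb : b ^ p ^ n = 1) :
    b = 1 ∨ ∃ j < n, IsPrimitiveRoot (b ^ p ^ j) p := by
  obtain ⟨k, hkn, hk⟩ := (Nat.dvd_prime_pow hp).mp (orderOf_dvd_of_pow_eq_one hb)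
  rcases k with _ | j
  · exact .inl (orderOf_eq_one_iff.mp (by simpa using hk))
  · refine .inr ⟨j, hkn, (IsPrimitiveRoot.orderOf b).pow ?_ (by rw [hk, pow_succ])⟩
    exact hk ▸ pow_pos hp.pos _

theorem ZMod.intCast_ne_zero_of_isCoprime {N : ℕ} [Fact N.Prime] {a : ℤ}
    (ha : IsCoprime a N) : (a : ZMod N) ≠ 0 :=
  ((ZMod.coe_int_isUnit_iff_isCoprime a N).mpr ha.symm).ne_zero

theorem p_miller_rabin_general (p K n N : ℕ) (hp : p.Prime) (hN : N = K * p ^ n + 1) (hNp : Nat.Prime N)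
    (a : ℤ) (ha : IsCoprime a (N : ℤ)) :
    (a : ZMod N) ^ K = 1 ∨
      ∃ j, j ≤ n - 1 ∧ ∑ i ∈ Finset.range p, ((a : ZMod N) ^ (K * p ^ j)) ^ i = 0 := by
  have : Fact N.Prime := ⟨hNp⟩
  have hfermat : ((a : ZMod N) ^ K) ^ p ^ n = 1 := by
    rw [← pow_mul, show K * p ^ n = N - 1 by omega]
    exact ZMod.pow_card_sub_one_eq_one (ZMod.intCast_ne_zero_of_isCoprime ha)
  rcases eq_one_or_exists_isPrimitiveRoot_pow_prime_pow hp hfermat with h | ⟨j, hjn, hroot⟩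
  · exact .inl h
  · refine .inr ⟨j, by omega, ?_⟩
    rw [pow_mul]
    exact hroot.geom_sum_eq_zero hp.one_lt

theorem p_miller_rabin (p K n N : ℕ) (hp : p.Prime) (hK : 0 < K) (hKe : Even K)
    (hKp : Nat.gcd K p = 1) (hn : 0 < n) (hN : N = K * p ^ n + 1) (hNp : Nat.Prime N)
    (a : ℤ) (ha1 : 1 < a) (ha : IsCoprime a (N : ℤ)) :
    (a : ZMod N) ^ K = 1 ∨
      ∃ j, j ≤ n - 1 ∧ ∑ i ∈ Finset.range p, ((a : ZMod N) ^ (K * p ^ j)) ^ i = 0 :=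
  p_miller_rabin_general p K n N hp hN hNp a ha
end

section
/- Let N = K·2^n + 1 where K is odd. Define S_0 = 2^K and S_i = S_{i-1}^2 for i ≥ 1 (so S_i = 2^(K·2^i)). If there exists j with j ≤ n and 2^(2j) > K·2^n such that S_j ≡ -1 (mod N), then N is prime. -/
/-!
Write `x = 2 ^ K`, so that `x ^ (2 ^ j) ≡ -1 (mod N)`. For every prime `p ∣ N` the order of `x`
modulo `p` is then exactly `2 ^ (j + 1)`, which divides `p - 1`; hence `p > 2 ^ (j + 1)` and
`p ^ 2 > 4 ^ (j + 1) > N`. A composite `N` would have a prime factor with `p ^ 2 ≤ N`.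
-/

theorem Nat.prime_of_dvd_pow_two_pow_add_one {N a j : ℕ} (hN1 : 1 < N) (hNj : N ≤ 2 ^ (2 * j))
    (hodd : Odd N) (hdvd : N ∣ a ^ 2 ^ j + 1) : N.Prime := by
  by_contra hNp
  set p := N.minFac
  have hp : p.Prime := Nat.minFac_prime hN1.ne'
  have hp2 : p ≠ 2 := hodd.ne_two_of_dvd_nat (Nat.minFac_dvd N)
  obtain ⟨k, hk⟩ := pow_pow_add_primeFactors_one_lt hp hp2 ((Nat.minFac_dvd N).trans hdvd)
  have hk0 : k ≠ 0 := by
    rintro rfl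
    exact hp.one_lt.ne' (by simpa using hk)
  have hpj : 2 ^ (j + 1) < p := by
    rw [hk]
    exact Nat.lt_succ_of_le (Nat.le_mul_of_pos_left _ (Nat.pos_of_ne_zero hk0))
  have hpN : p ^ 2 ≤ N := Nat.minFac_sq_le_self (by omega) hNp
  have : 2 ^ (2 * j) < p ^ 2 := by
    calc 2 ^ (2 * j) < 2 ^ (2 * (j + 1)) := Nat.pow_lt_pow_right (by norm_num) (by omega)
      _ = (2 ^ (j + 1)) ^ 2 := by rw [← pow_mul, mul_comm]
      _ < p ^ 2 := Nat.pow_lt_pow_left hpj two_ne_zero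
  omega

theorem proth_sequence_general (K n N : ℕ) (hK0 : 0 < K) (hn : 1 ≤ n)
    (hN : N = K * 2 ^ n + 1)
    (h : ∃ j, j ≤ n ∧ K * 2 ^ n < 2 ^ (2 * j) ∧ (2 : ZMod N) ^ (K * 2 ^ j) = -1) :
    Nat.Prime N := by
  obtain ⟨j, -, hsize, hpow⟩ := h
  subst hN
  apply Nat.prime_of_dvd_pow_two_pow_add_one (a := 2 ^ K) (j := j)
  · exact Nat.lt_add_of_pos_left (Nat.mul_pos hK0 (Nat.two_pow_pos n))
  · omega
  · exact ((even_two.pow_of_ne_zero (by omega)).mul_left K).add_one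
  · rw [← ZMod.natCast_eq_zero_iff]
    push_cast
    rw [← pow_mul, hpow, neg_add_cancel]

theorem proth_sequence (K n N : ℕ) (hK : Odd K) (hK0 : 0 < K) (hn : 1 ≤ n)
    (hN : N = K * 2 ^ n + 1)
    (h : ∃ j, j ≤ n ∧ K * 2 ^ n < 2 ^ (2 * j) ∧ (2 : ZMod N) ^ (K * 2 ^ j) = -1) :
    Nat.Prime N :=
  proth_sequence_general K n N hK0 hn hN h
end

section
/- Let p be a prime and q a prime divisor of an integer N with Φ_p(X^(p^(n-1))) ≡ 0 (mod N) for some integer X and n ≥ 1. Then q ≡ 1 (mod p^n); in particular every prime divisor of N is congruent to 1 modulo p^n. -/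
/-!
Reduce modulo `q` and put `x = X mod q`. Since `(y - 1) Φ_p(y) = y ^ p - 1`, the hypothesis
`Φ_p(x ^ p ^ (n - 1)) = 0` gives `x ^ p ^ n = 1`, while `x ^ p ^ (n - 1) = 1` would make
`Φ_p(x ^ p ^ (n - 1)) = p`, which is nonzero mod `q` because `q ∤ p`. Hence `x` has order exactly
`p ^ n` in `(ZMod q)ˣ`, a group of order `q - 1`.
-/

open Finset

section GeomSum

variable {R : Type*} {p m : ℕ} {x : R}

theorem pow_pow_succ_eq_one_of_geom_sum_eq_zero [CommRing R]
    (h : ∑ i ∈ range p, (x ^ p ^ m) ^ i = 0) : x ^ p ^ (m + 1) = 1 := by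
  have hmul := geom_sum_mul (x ^ p ^ m) p
  rw [h, zero_mul, ← pow_mul, ← pow_succ, eq_comm, sub_eq_zero] at hmul
  exact hmul

theorem pow_pow_ne_one_of_geom_sum_eq_zero [Semiring R] (hp : (p : R) ≠ 0)
    (h : ∑ i ∈ range p, (x ^ p ^ m) ^ i = 0) : x ^ p ^ m ≠ 1 := by
  intro hx
  exact hp (by simpa [hx] using h)

theorem orderOf_eq_prime_pow_of_geom_sum_eq_zero [CommRing R] [Fact p.Prime] (hp : (p : R) ≠ 0)
    (h : ∑ i ∈ range p, (x ^ p ^ m) ^ i = 0) : orderOf x = p ^ (m + 1) :=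
  orderOf_eq_prime_pow (pow_pow_ne_one_of_geom_sum_eq_zero hp h)
    (pow_pow_succ_eq_one_of_geom_sum_eq_zero h)

end GeomSum

theorem ZMod.modEq_one_of_orderOf_eq {q k : ℕ} [Fact q.Prime] {a : ZMod q} (ha : orderOf a = k)
    (hk : k ≠ 0) : q ≡ 1 [MOD k] := by
  have ha0 : a ≠ 0 := by
    rintro rfl
    exact hk (ha ▸ orderOf_zero (ZMod q))
  exact ((Nat.modEq_iff_dvd' (Fact.out : q.Prime).one_lt.le).mpr
    (ha ▸ ZMod.orderOf_dvd_card_sub_one ha0)).symm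

theorem ZMod.natCast_ne_zero_of_dvd_of_coprime {p q N : ℕ} (hq : q.Prime) (hqN : q ∣ N)
    (hNp : N.Coprime p) : (p : ZMod q) ≠ 0 := by
  rw [Ne, ZMod.natCast_eq_zero_iff]
  exact fun hqp => hq.one_lt.ne' (Nat.eq_one_of_dvd_one (hNp ▸ Nat.dvd_gcd hqN hqp))

theorem prime_divisors_congruent_general (p n N : ℕ) (hp : p.Prime) (hn : 1 ≤ n)
    (hNp : Nat.gcd N p = 1) (X : ℤ)
    (h : ∑ i ∈ Finset.range p, ((X : ZMod N) ^ (p ^ (n - 1))) ^ i = 0)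
    (q : ℕ) (hq : q.Prime) (hqN : q ∣ N) : q ≡ 1 [MOD p ^ n] := by
  have := Fact.mk hp
  have := Fact.mk hq
  obtain ⟨m, rfl⟩ := Nat.exists_eq_add_of_le' hn
  have hq_root : ∑ i ∈ range p, ((X : ZMod q) ^ p ^ m) ^ i = 0 := by
    simpa [map_sum, map_pow] using congrArg (ZMod.castHom hqN (ZMod q)) h
  have hord := orderOf_eq_prime_pow_of_geom_sum_eq_zero
    (ZMod.natCast_ne_zero_of_dvd_of_coprime hq hqN hNp) hq_root
  exact ZMod.modEq_one_of_orderOf_eq hord (pow_ne_zero _ hp.ne_zero)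

theorem prime_divisors_congruent (p n N : ℕ) (hp : p.Prime) (hn : 1 ≤ n)
    (hN : 1 < N) (hNp : Nat.gcd N p = 1) (X : ℤ)
    (h : ∑ i ∈ Finset.range p, ((X : ZMod N) ^ (p ^ (n - 1))) ^ i = 0)
    (q : ℕ) (hq : q.Prime) (hqN : q ∣ N) : q ≡ 1 [MOD p ^ n] :=
  prime_divisors_congruent_general p n N hp hn hNp X h q hq hqN
end
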